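/- Let T_− < T_+ be real numbers and let ρ(y) = 1/(π √((y−T_−)(T_+−y))) for y ∈ (T_−, T_+), a linear transformation of the arcsine (Beta(1/2,1/2)) density. Then ρ is the invariant density of the single-individual opinion model: for every bounded continuous f : [T_−, T_+] → ℝ, ∫_{T_−}^{T_+} ρ(y) ( ∫₀¹ [ f(u T_− + (1−u) y) + f(u y + (1−u) T_+) − 2 f(y) ] du ) dy = 0. -/

import Mathlib

/-!
After the substitutions `x = u T₋ + (1 - u) y` and `x = u y + (1 - u) T₊`, the generator reads
`L f (y) = (y - T₋)⁻¹ P(y) + (T₊ - y)⁻¹ Q(y) - 2 f(y)` with `P(y) = ∫_{T₋}^y f`, `Q(y) = ∫_y^{T₊} f`.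
With `c = 2 / (π (T₊ - T₋))`, the weights `c √((y - T₋)/(T₊ - y))` and `c √((T₊ - y)/(y - T₋))`
have derivatives `ρ/(T₊ - y)` and `-ρ/(y - T₋)` and sum to `2ρ`, so `ρ · L f` is the derivative of
`Φ = c (√((y - T₋)/(T₊ - y)) Q - √((T₊ - y)/(y - T₋)) P)`.
Since `|P| ≤ C (y - T₋)` and `|Q| ≤ C (T₊ - y)`, `|Φ| ≤ 2cC √((y - T₋)(T₊ - y))` vanishes at both
endpoints, and the integral of `ρ · L f` over `(T₋, T₊)` is `0 - 0`.
-/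

open MeasureTheory Set Filter Topology Real

noncomputable def arcsineDensity (a b y : ℝ) : ℝ := 1 / (π * √((y - a) * (b - y)))

noncomputable def opinionGenerator (a b : ℝ) (f : ℝ → ℝ) (y : ℝ) : ℝ :=
  ∫ u in (0:ℝ)..1, (f (u * a + (1 - u) * y) + f (u * y + (1 - u) * b) - 2 * f y)

noncomputable def arcsinePotential (a b : ℝ) (f : ℝ → ℝ) (y : ℝ) : ℝ :=
  2 / (π * (b - a)) *
    (√(y - a) / √(b - y) * (∫ x in y..b, f x) - √(b - y) / √(y - a) * ∫ x in a..y, f x)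

section

variable {a b y C : ℝ} {f : ℝ → ℝ}

lemma arcsineDensity_nonneg (a b y : ℝ) : 0 ≤ arcsineDensity a b y := by
  unfold arcsineDensity; positivity

lemma arcsineDensity_eq (hy : y ∈ Ioo a b) :
    arcsineDensity a b y = 1 / (π * √(y - a) * √(b - y)) := by
  rw [arcsineDensity, sqrt_mul (sub_nonneg.2 hy.1.le), mul_assoc]

lemma hasDerivAt_arcsin_affine_div_pi (hy : y ∈ Ioo a b) :
    HasDerivAt (fun z => π⁻¹ * arcsin ((2 * z - a - b) / (b - a))) (arcsineDensity a b y) y := by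
  have hba : 0 < b - a := by linarith [hy.1, hy.2]
  set t := (2 * y - a - b) / (b - a)
  have ht₀ : -1 < t := by rw [lt_div_iff₀ hba]; linarith [hy.1]
  have ht₁ : t < 1 := by rw [div_lt_iff₀ hba]; linarith [hy.2]
  have hlin : HasDerivAt (fun z => (2 * z - a - b) / (b - a)) (2 / (b - a)) y := by
    simpa using ((((hasDerivAt_id y).const_mul 2).sub_const a).sub_const b).div_const (b - a)
  refine (((hasDerivAt_arcsin ht₀.ne' ht₁.ne).comp y hlin).const_mul π⁻¹).congr_deriv ?_
  have hsq : 1 - t ^ 2 = (2 / (b - a)) ^ 2 * ((y - a) * (b - y)) := by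
    simp only [t]; field_simp; ring
  rw [hsq, sqrt_mul (sq_nonneg _), sqrt_sq (by positivity), arcsineDensity]
  field_simp

lemma integrableOn_arcsineDensity : IntegrableOn (arcsineDensity a b) (Ioo a b) :=
  (intervalIntegral.integrableOn_deriv_of_nonneg
    ((continuous_const.mul (continuous_arcsin.comp (by fun_prop))).continuousOn)
    (fun _ hy => hasDerivAt_arcsin_affine_div_pi hy)
    (fun y _ => arcsineDensity_nonneg a b y)).mono_set Ioo_subset_Ioc_self

lemma convexCombination_mem_Icc {p q u : ℝ} (hp : p ∈ Icc a b) (hq : q ∈ Icc a b)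
    (hu : u ∈ Icc (0:ℝ) 1) : u * p + (1 - u) * q ∈ Icc a b := by
  convert convex_Icc a b hq hp (sub_nonneg.2 hu.2) hu.1 (by ring) using 1
  simp only [smul_eq_mul]; ring

lemma integral_comp_convexCombination {p q : ℝ} (f : ℝ → ℝ) (hpq : p ≠ q) :
    ∫ u in (0:ℝ)..1, f (u * p + (1 - u) * q) = (p - q)⁻¹ * ∫ x in q..p, f x := by
  have := intervalIntegral.integral_comp_mul_add (a := 0) (b := 1) f (sub_ne_zero.2 hpq) q
  simp only [mul_zero, zero_add, mul_one, sub_add_cancel, smul_eq_mul] at this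
  rw [← this]
  congr 1 with u
  ring_nf

lemma opinionGenerator_eq (hf : ContinuousOn f (Icc a b)) (hy : y ∈ Ioo a b) :
    opinionGenerator a b f y =
      (y - a)⁻¹ * (∫ x in a..y, f x) + (b - y)⁻¹ * (∫ x in y..b, f x) - 2 * f y := by
  have hint : ∀ {p q}, p ∈ Icc a b → q ∈ Icc a b →
      IntervalIntegrable (fun u : ℝ => f (u * p + (1 - u) * q)) volume 0 1 := fun hp hq =>
    (hf.comp (by fun_prop) fun _ hu =>
      convexCombination_mem_Icc hp hq ((uIcc_of_le (zero_le_one (α := ℝ))) ▸ hu)).intervalIntegrable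
  have hyI : y ∈ Icc a b := Ioo_subset_Icc_self hy
  have hleft := hint (left_mem_Icc.2 (hy.1.trans hy.2).le) hyI
  have hright := hint hyI (right_mem_Icc.2 (hy.1.trans hy.2).le)
  rw [opinionGenerator, intervalIntegral.integral_sub (hleft.add hright) intervalIntegrable_const,
    intervalIntegral.integral_add hleft hright, integral_comp_convexCombination f hy.1.ne,
    integral_comp_convexCombination f hy.2.ne, intervalIntegral.integral_symm a y,
    intervalIntegral.integral_symm y b, intervalIntegral.integral_const, ← neg_sub y a,
    ← neg_sub b y]
  simp only [inv_neg, sub_zero, one_smul]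
  ring

lemma abs_intervalIntegral_le (hC : ∀ x ∈ Icc a b, |f x| ≤ C) {p q : ℝ} (hp : a ≤ p)
    (hpq : p ≤ q) (hq : q ≤ b) : |∫ x in p..q, f x| ≤ C * (q - p) := by
  have hbound : ∀ x ∈ uIoc p q, ‖f x‖ ≤ C := fun x hx => by
    rw [uIoc_of_le hpq] at hx
    exact hC x ⟨hp.trans hx.1.le, hx.2.trans hq⟩
  simpa [abs_of_nonneg (sub_nonneg.2 hpq)] using
    intervalIntegral.norm_integral_le_of_norm_le_const hbound

lemma abs_opinionGenerator_le (hC : ∀ x ∈ Icc a b, |f x| ≤ C) (hy : y ∈ Icc a b) :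
    |opinionGenerator a b f y| ≤ 4 * C := by
  have hab : a ≤ b := hy.1.trans hy.2
  have hbound : ∀ u ∈ uIoc (0:ℝ) 1,
      ‖f (u * a + (1 - u) * y) + f (u * y + (1 - u) * b) - 2 * f y‖ ≤ 4 * C := fun u hu => by
    rw [uIoc_of_le zero_le_one] at hu
    obtain ⟨h₁, h₁'⟩ := abs_le.1 <|
      hC _ (convexCombination_mem_Icc (left_mem_Icc.2 hab) hy (Ioc_subset_Icc_self hu))
    obtain ⟨h₂, h₂'⟩ := abs_le.1 <|
      hC _ (convexCombination_mem_Icc hy (right_mem_Icc.2 hab) (Ioc_subset_Icc_self hu))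
    obtain ⟨h₃, h₃'⟩ := abs_le.1 <| hC y hy
    exact abs_le.2 ⟨by linarith, by linarith⟩
  simpa [opinionGenerator] using intervalIntegral.norm_integral_le_of_norm_le_const hbound

lemma hasDerivAt_sqrt_sub_div_sqrt_const_sub (hy : y ∈ Ioo a b) :
    HasDerivAt (fun z => √(z - a) / √(b - z)) ((b - a) / (2 * √(y - a) * √(b - y) ^ 3)) y := by
  have hs := sqrt_pos.2 (sub_pos.2 hy.1)
  have ht := sqrt_pos.2 (sub_pos.2 hy.2)
  have hs' := ((hasDerivAt_id' y).sub_const a).sqrt (sub_pos.2 hy.1).ne'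
  have ht' := ((hasDerivAt_id' y).const_sub b).sqrt (sub_pos.2 hy.2).ne'
  refine (hs'.div ht' ht.ne').congr_deriv ?_
  have hs2 := sq_sqrt (sub_pos.2 hy.1).le
  have ht2 := sq_sqrt (sub_pos.2 hy.2).le
  field_simp
  linear_combination hs2 + ht2

lemma hasDerivAt_sqrt_const_sub_div_sqrt_sub (hy : y ∈ Ioo a b) :
    HasDerivAt (fun z => √(b - z) / √(z - a)) (-(b - a) / (2 * √(y - a) ^ 3 * √(b - y))) y := by
  have hs := sqrt_pos.2 (sub_pos.2 hy.1)
  have ht := sqrt_pos.2 (sub_pos.2 hy.2)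
  have hs' := ((hasDerivAt_id' y).sub_const a).sqrt (sub_pos.2 hy.1).ne'
  have ht' := ((hasDerivAt_id' y).const_sub b).sqrt (sub_pos.2 hy.2).ne'
  refine (ht'.div hs' hs.ne').congr_deriv ?_
  have hs2 := sq_sqrt (sub_pos.2 hy.1).le
  have ht2 := sq_sqrt (sub_pos.2 hy.2).le
  field_simp
  linear_combination -(hs2 + ht2)

lemma hasDerivAt_arcsinePotential (hf : ContinuousOn f (Icc a b)) (hy : y ∈ Ioo a b) :
    HasDerivAt (arcsinePotential a b f) (arcsineDensity a b y * opinionGenerator a b f y) y := by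
  have hfy : ContinuousAt f y := hf.continuousAt (Icc_mem_nhds hy.1 hy.2)
  have hmeas : StronglyMeasurableAtFilter f (𝓝 y) :=
    (hf.mono Ioo_subset_Icc_self).stronglyMeasurableAtFilter isOpen_Ioo y hy
  have hP := intervalIntegral.integral_hasDerivAt_right
    ((hf.mono (Icc_subset_Icc_right hy.2.le)).intervalIntegrable_of_Icc hy.1.le) hmeas hfy
  have hQ := intervalIntegral.integral_hasDerivAt_left
    ((hf.mono (Icc_subset_Icc_left hy.1.le)).intervalIntegrable_of_Icc hy.2.le) hmeas hfy
  refine ((((hasDerivAt_sqrt_sub_div_sqrt_const_sub hy).mul hQ).sub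
    ((hasDerivAt_sqrt_const_sub_div_sqrt_sub hy).mul hP)).const_mul _).congr_deriv ?_
  rw [opinionGenerator_eq hf hy, arcsineDensity_eq hy]
  have hs := sqrt_pos.2 (sub_pos.2 hy.1)
  have ht := sqrt_pos.2 (sub_pos.2 hy.2)
  have hya := (sq_sqrt (sub_pos.2 hy.1).le).symm
  have hby := (sq_sqrt (sub_pos.2 hy.2).le).symm
  set s := √(y - a)
  set t := √(b - y)
  rw [show b - a = s ^ 2 + t ^ 2 by rw [← hya, ← hby]; ring, hya, hby]
  field_simp
  ring

lemma abs_arcsinePotential_le (hC : ∀ x ∈ Icc a b, |f x| ≤ C) (hy : y ∈ Ioo a b) :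
    |arcsinePotential a b f y| ≤ 4 * C / (π * (b - a)) * √((y - a) * (b - y)) := by
  have hP := abs_intervalIntegral_le hC le_rfl hy.1.le hy.2.le
  have hQ := abs_intervalIntegral_le hC hy.1.le hy.2.le le_rfl
  have hc : 0 < 2 / (π * (b - a)) := by have := sub_pos.2 (hy.1.trans hy.2); positivity
  have hs := sqrt_pos.2 (sub_pos.2 hy.1)
  have ht := sqrt_pos.2 (sub_pos.2 hy.2)
  have hya := (sq_sqrt (sub_pos.2 hy.1).le).symm
  have hby := (sq_sqrt (sub_pos.2 hy.2).le).symm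
  rw [arcsinePotential, abs_mul, abs_of_pos hc, sqrt_mul (sub_pos.2 hy.1).le]
  set s := √(y - a)
  set t := √(b - y)
  rw [hya] at hP
  rw [hby] at hQ
  calc 2 / (π * (b - a)) * |s / t * (∫ x in y..b, f x) - t / s * ∫ x in a..y, f x|
      ≤ 2 / (π * (b - a)) * (s / t * |∫ x in y..b, f x| + t / s * |∫ x in a..y, f x|) := by
        gcongr
        refine (abs_sub _ _).trans_eq ?_
        rw [abs_mul, abs_mul, abs_of_pos (div_pos hs ht), abs_of_pos (div_pos ht hs)]
    _ ≤ 2 / (π * (b - a)) * (s / t * (C * t ^ 2) + t / s * (C * s ^ 2)) := by gcongr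
    _ = 4 * C / (π * (b - a)) * (s * t) := by field_simp; ring

lemma tendsto_arcsinePotential {l : Filter ℝ} (hC : ∀ x ∈ Icc a b, |f x| ≤ C)
    (hl : Tendsto (fun y => (y - a) * (b - y)) l (𝓝 0)) (hIoo : ∀ᶠ y in l, y ∈ Ioo a b) :
    Tendsto (arcsinePotential a b f) l (𝓝 0) := by
  have hbound : Tendsto (fun y => 4 * C / (π * (b - a)) * √((y - a) * (b - y))) l (𝓝 0) := by
    simpa using hl.sqrt.const_mul (4 * C / (π * (b - a)))
  exact squeeze_zero_norm' (hIoo.mono fun y hy => abs_arcsinePotential_le hC hy) hbound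

lemma integrableOn_arcsineDensity_mul_opinionGenerator (hf : ContinuousOn f (Icc a b))
    (hC : ∀ x ∈ Icc a b, |f x| ≤ C) :
    IntegrableOn (fun y => arcsineDensity a b y * opinionGenerator a b f y) (Ioo a b) := by
  have hmeas : AEStronglyMeasurable (fun y => arcsineDensity a b y * opinionGenerator a b f y)
      (volume.restrict (Ioo a b)) :=
    (measurable_deriv (arcsinePotential a b f)).aestronglyMeasurable.congr <|
      (ae_restrict_mem measurableSet_Ioo).mono fun y hy => (hasDerivAt_arcsinePotential hf hy).deriv
  refine Integrable.mono' (integrableOn_arcsineDensity.const_mul (4 * C)) hmeas ?_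
  filter_upwards [ae_restrict_mem measurableSet_Ioo] with y hy
  rw [norm_mul, Real.norm_of_nonneg (arcsineDensity_nonneg a b y), mul_comm (4 * C)]
  exact mul_le_mul_of_nonneg_left (abs_opinionGenerator_le hC (Ioo_subset_Icc_self hy))
    (arcsineDensity_nonneg a b y)

theorem integral_arcsineDensity_mul_opinionGenerator (hab : a < b)
    (hf : ContinuousOn f (Icc a b)) :
    ∫ y in Ioo a b, arcsineDensity a b y * opinionGenerator a b f y = 0 := by
  obtain ⟨C, hC⟩ := isCompact_Icc.exists_bound_of_continuousOn hf
  have hq : Continuous fun y => (y - a) * (b - y) := by fun_prop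
  rw [← integral_Ioc_eq_integral_Ioo, ← intervalIntegral.integral_of_le hab.le,
    intervalIntegral.integral_eq_sub_of_hasDerivAt_of_tendsto hab
      (fun y hy => hasDerivAt_arcsinePotential hf hy)
      ((intervalIntegrable_iff_integrableOn_Ioo_of_le hab.le).2
        (integrableOn_arcsineDensity_mul_opinionGenerator hf hC))
      (tendsto_arcsinePotential hC ((hq.tendsto' a 0 (by simp)).mono_left nhdsWithin_le_nhds)
        (Ioo_mem_nhdsGT hab))
      (tendsto_arcsinePotential hC ((hq.tendsto' b 0 (by simp)).mono_left nhdsWithin_le_nhds)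
        (Ioo_mem_nhdsLT hab)), sub_self]

end

theorem arcsine_invariant_single_individual
    (Tm Tp : ℝ) (hT : Tm < Tp) (f : ℝ → ℝ)
    (hf : ContinuousOn f (Set.Icc Tm Tp)) :
    ∫ y in Set.Ioo Tm Tp,
      (1 / (Real.pi * Real.sqrt ((y - Tm) * (Tp - y)))) *
        ∫ u in (0:ℝ)..1,
          (f (u * Tm + (1 - u) * y) + f (u * y + (1 - u) * Tp) - 2 * f y) = 0 :=
  integral_arcsineDensity_mul_opinionGenerator hT hf
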